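/- arXiv:1903.11787 — 4 statements merged into one kernel-verified Lean document; each statement's English description precedes it below -/
import Mathlib

section
/- Let φ̂ : 𝒳^l × 𝒴^n → 𝒳^n be the symbol-wise maximum a posteriori decoder, i.e. for each i ∈ {1,…,n} the i-th coordinate φ̂_i(c,y) is a maximizer of a ↦ Prob(X_i = a | AX = c, Y = y) whenever Prob(AX = c, Y = y) > 0 (and is arbitrary otherwise). Then for every decoder φ : 𝒳^l × 𝒴^n → 𝒳^n, Prob(φ̂(AX,Y) ≠ X) ≤ n · Prob(φ(AX,Y) ≠ X). -/
open Finset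

noncomputable def probOf {Ω : Type*} [Fintype Ω] (p : Ω → ℝ) (E : Set Ω) : ℝ :=
  ∑ ω, E.indicator p ω

noncomputable def condProb {Ω : Type*} [Fintype Ω] (p : Ω → ℝ) (E F : Set Ω) : ℝ :=
  probOf p (E ∩ F) / probOf p F

noncomputable def entropyOf {Ω Z : Type*} [Fintype Ω] [Fintype Z] (p : Ω → ℝ) (V : Ω → Z) : ℝ :=
  ∑ z, Real.negMulLog (probOf p {ω | V ω = z})

noncomputable def condEntropyOf {Ω U V : Type*} [Fintype Ω] [Fintype U] [Fintype V]
    (p : Ω → ℝ) (Uv : Ω → U) (Vv : Ω → V) : ℝ :=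
  entropyOf p (fun ω => (Uv ω, Vv ω)) - entropyOf p Vv

def prefixVec {𝒳 : Type*} {n : ℕ} (c : Fin n → 𝒳) (m : ℕ) (h : m ≤ n) : Fin m → 𝒳 :=
  fun k => c ⟨k.1, lt_of_lt_of_le k.2 h⟩

def scVecGo {𝒳 : Type*} {n : ℕ} (g : (i : Fin n) → (Fin i.1 → 𝒳) → 𝒳) :
    (k : ℕ) → k < n → 𝒳
  | k, hk => g ⟨k, hk⟩ (fun j => scVecGo g j.1 (j.2.trans hk))
termination_by k _ => k
decreasing_by exact j.2

def scVec {𝒳 : Type*} {n : ℕ} (g : (i : Fin n) → (Fin i.1 → 𝒳) → 𝒳) : Fin n → 𝒳 :=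
  fun i => scVecGo g i.1 i.2

def scDec {𝒳 𝒴 : Type*} {n l : ℕ}
    (I1 : Finset (Fin n)) (hc1 : I1.card = l)
    (f : (i : Fin n) → (Fin i.1 → 𝒳) → (Fin n → 𝒴) → 𝒳)
    (c : Fin l → 𝒳) (y : Fin n → 𝒴) : Fin n → 𝒳 :=
  scVec (fun i pref => if h : i ∈ I1 then c ((I1.orderIsoOfFin hc1).symm ⟨i, h⟩) else f i pref y)

def scDecOrd {𝒳 𝒴 : Type*} {n l : ℕ}
    (f : (i : Fin n) → (Fin i.1 → 𝒳) → (Fin n → 𝒴) → 𝒳)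
    (c : Fin l → 𝒳) (y : Fin n → 𝒴) : Fin n → 𝒳 :=
  scVec (fun i pref => if h : i.1 < l then c ⟨i.1, h⟩ else f i pref y)

section aux
variable {Ω : Type*} [Fintype Ω] {p : Ω → ℝ}

lemma probOf_nonneg (hp : ∀ ω, 0 ≤ p ω) (E : Set Ω) : 0 ≤ probOf p E :=
  Finset.sum_nonneg fun ω _ => Set.indicator_nonneg (fun a _ => hp a) ω

lemma probOf_mono (hp : ∀ ω, 0 ≤ p ω) {E F : Set Ω} (h : E ⊆ F) :
    probOf p E ≤ probOf p F :=
  Finset.sum_le_sum fun ω _ => Set.indicator_le_indicator_of_subset h hp ω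

lemma probOf_union_le {ι : Type*} [Fintype ι] (hp : ∀ ω, 0 ≤ p ω) (E : ι → Set Ω) :
    probOf p (⋃ i, E i) ≤ ∑ i, probOf p (E i) := by
  unfold probOf
  rw [Finset.sum_comm]
  refine Finset.sum_le_sum fun ω _ => ?_
  by_cases hω : ω ∈ ⋃ i, E i
  · obtain ⟨i, hi⟩ := Set.mem_iUnion.mp hω
    rw [Set.indicator_of_mem hω]
    calc p ω = (E i).indicator p ω := (Set.indicator_of_mem hi p).symm
      _ ≤ ∑ j, (E j).indicator p ω :=
        Finset.single_le_sum (fun j _ => Set.indicator_nonneg (fun a _ => hp a) ω)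
          (Finset.mem_univ i)
  · rw [Set.indicator_of_notMem hω]
    exact Finset.sum_nonneg fun j _ => Set.indicator_nonneg (fun a _ => hp a) ω

lemma probOf_partition {Z : Type*} [Fintype Z] (f : Ω → Z) (E : Set Ω) :
    probOf p E = ∑ z, probOf p (E ∩ {ω | f ω = z}) := by
  unfold probOf
  rw [Finset.sum_comm]
  refine Finset.sum_congr rfl fun ω _ => ?_
  rw [Finset.sum_eq_single (f ω)]
  · by_cases hω : ω ∈ E
    · rw [Set.indicator_of_mem hω, Set.indicator_of_mem (show ω ∈ E ∩ {ω' | f ω' = f ω} from ⟨hω, rfl⟩)]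
    · rw [Set.indicator_of_notMem hω, Set.indicator_of_notMem (fun h => hω h.1)]
  · intro z _ hz
    exact Set.indicator_of_notMem (fun h => hz h.2.symm) p
  · intro h; exact absurd (Finset.mem_univ _) h

lemma probOf_add_compl (E G : Set Ω) :
    probOf p (E ∩ G) + probOf p (Eᶜ ∩ G) = probOf p G := by
  unfold probOf
  rw [← Finset.sum_add_distrib]
  refine Finset.sum_congr rfl fun ω _ => ?_
  by_cases hG : ω ∈ G
  · by_cases hE : ω ∈ E
    · rw [Set.indicator_of_mem (Set.mem_inter hE hG), Set.indicator_of_notMem (fun h => h.1 hE),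
        Set.indicator_of_mem hG, add_zero]
    · rw [Set.indicator_of_notMem (fun h => hE h.1), Set.indicator_of_mem (show ω ∈ Eᶜ ∩ G from ⟨hE, hG⟩),
        Set.indicator_of_mem hG, zero_add]
  · rw [Set.indicator_of_notMem (fun h => hG h.2), Set.indicator_of_notMem (fun h => hG h.2),
      Set.indicator_of_notMem hG, add_zero]

end aux

/-- the symbol-wise MAP decoder `φhat` satisfies
`Prob(φhat(AX,Y) ≠ X) ≤ n · Prob(φ(AX,Y) ≠ X)` for every decoder `φ`. -/
theorem stmt0
    {𝒳 𝒴 : Type*} [Fintype 𝒳] [Fintype 𝒴]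
    (hcard : 2 ≤ Fintype.card 𝒳)
    (n l : ℕ) (hl : l ≤ n)
    (μ : ((Fin n → 𝒳) × (Fin n → 𝒴)) → ℝ)
    (hμ0 : ∀ ω, 0 ≤ μ ω) (hμ1 : ∑ ω, μ ω = 1)
    (A : (Fin n → 𝒳) → (Fin l → 𝒳))
    (φhat : (Fin l → 𝒳) → (Fin n → 𝒴) → (Fin n → 𝒳))
    (hMAP : ∀ (c : Fin l → 𝒳) (y : Fin n → 𝒴) (i : Fin n),
      0 < probOf μ {ω | A ω.1 = c ∧ ω.2 = y} →
      ∀ a : 𝒳,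
        condProb μ {ω | ω.1 i = a} {ω | A ω.1 = c ∧ ω.2 = y} ≤
          condProb μ {ω | ω.1 i = φhat c y i} {ω | A ω.1 = c ∧ ω.2 = y})
    (φ : (Fin l → 𝒳) → (Fin n → 𝒴) → (Fin n → 𝒳)) :
    probOf μ {ω | φhat (A ω.1) ω.2 ≠ ω.1} ≤
      (n : ℝ) * probOf μ {ω | φ (A ω.1) ω.2 ≠ ω.1} := by
  classical
  have hiU : {ω : (Fin n → 𝒳) × (Fin n → 𝒴) | φhat (A ω.1) ω.2 ≠ ω.1} =
      ⋃ i, {ω | φhat (A ω.1) ω.2 i ≠ ω.1 i} := by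
    ext ω
    simp [Function.ne_iff]
  have key : ∀ i : Fin n,
      probOf μ {ω | φhat (A ω.1) ω.2 i ≠ ω.1 i} ≤
        probOf μ {ω | φ (A ω.1) ω.2 i ≠ ω.1 i} := by
    intro i
    have hdec : ∀ (ψ : (Fin l → 𝒳) → (Fin n → 𝒴) → (Fin n → 𝒳)),
        probOf μ {ω | ψ (A ω.1) ω.2 i ≠ ω.1 i} =
          ∑ cy : (Fin l → 𝒳) × (Fin n → 𝒴),
            probOf μ ({ω | ω.1 i ≠ ψ cy.1 cy.2 i} ∩ {ω | A ω.1 = cy.1 ∧ ω.2 = cy.2}) := by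
      intro ψ
      rw [probOf_partition (fun ω => (A ω.1, ω.2))]
      refine Finset.sum_congr rfl fun cy _ => ?_
      congr 1
      ext ω
      constructor
      · rintro ⟨h1, rfl⟩
        exact ⟨fun h => h1 h.symm, rfl, rfl⟩
      · rintro ⟨h1, h2, h3⟩
        refine ⟨?_, Prod.ext h2 h3⟩
        simp only [Set.mem_setOf_eq] at h1 ⊢
        rw [h2, h3]
        exact fun h => h1 h.symm
    rw [hdec φhat, hdec φ]
    refine Finset.sum_le_sum fun cy _ => ?_
    set Fs : Set ((Fin n → 𝒳) × (Fin n → 𝒴)) := {ω | A ω.1 = cy.1 ∧ ω.2 = cy.2} with hFs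
    have hcompl : ∀ a : 𝒳,
        probOf μ ({ω : (Fin n → 𝒳) × (Fin n → 𝒴) | ω.1 i ≠ a} ∩ Fs) =
          probOf μ Fs - probOf μ ({ω | ω.1 i = a} ∩ Fs) := by
      intro a
      have h := probOf_add_compl (p := μ) {ω : (Fin n → 𝒳) × (Fin n → 𝒴) | ω.1 i = a} Fs
      have e : ({ω : (Fin n → 𝒳) × (Fin n → 𝒴) | ω.1 i = a})ᶜ =
          {ω : (Fin n → 𝒳) × (Fin n → 𝒴) | ω.1 i ≠ a} := rfl
      rw [e] at h
      linarith
    rw [hcompl, hcompl]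
    have hle : probOf μ ({ω : (Fin n → 𝒳) × (Fin n → 𝒴) | ω.1 i = φ cy.1 cy.2 i} ∩ Fs) ≤
        probOf μ ({ω | ω.1 i = φhat cy.1 cy.2 i} ∩ Fs) := by
      by_cases hpos : 0 < probOf μ Fs
      · have h := hMAP cy.1 cy.2 i hpos (φ cy.1 cy.2 i)
        unfold condProb at h
        have h2 := (div_le_div_iff₀ hpos hpos).mp h
        exact le_of_mul_le_mul_right h2 hpos
      · have h0 : probOf μ Fs = 0 :=
          le_antisymm (not_lt.mp hpos) (probOf_nonneg hμ0 Fs)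
        have b1 : ∀ E : Set ((Fin n → 𝒳) × (Fin n → 𝒴)),
            probOf μ (E ∩ Fs) = 0 := fun E =>
          le_antisymm (h0 ▸ probOf_mono hμ0 Set.inter_subset_right)
            (probOf_nonneg hμ0 _)
        rw [b1, b1]
    linarith
  calc probOf μ {ω | φhat (A ω.1) ω.2 ≠ ω.1}
      = probOf μ (⋃ i, {ω | φhat (A ω.1) ω.2 i ≠ ω.1 i}) := by rw [hiU]
    _ ≤ ∑ i, probOf μ {ω | φhat (A ω.1) ω.2 i ≠ ω.1 i} := probOf_union_le hμ0 _
    _ ≤ ∑ i, probOf μ {ω | φ (A ω.1) ω.2 i ≠ ω.1 i} := Finset.sum_le_sum fun i _ => key i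
    _ ≤ ∑ _i : Fin n, probOf μ {ω | φ (A ω.1) ω.2 ≠ ω.1} :=
        Finset.sum_le_sum fun i _ =>
          probOf_mono hμ0 (fun ω h he => h (by rw [he]))
    _ = (n : ℝ) * probOf μ {ω | φ (A ω.1) ω.2 ≠ ω.1} := by
        rw [Finset.sum_const, Finset.card_univ, Fintype.card_fin, nsmul_eq_mul]
end

section
/- Let f : 𝒳^l × 𝒴^n → 𝒳^n be the SC decoder built from arbitrary functions f_i : 𝒳^{i−1} × 𝒴^n → 𝒳 for i ∈ I0. Then Prob(f(AX,Y) ≠ C) ≤ Σ_{i∈I0} Prob(f_i(C_1^{i−1}, Y) ≠ C_i), where in the right-hand side f_i is evaluated at the true prefix C_1^{i−1} of the extended codeword C ≡ T(X). -/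
open Finset

lemma scVecGo_eq_of {𝒳 : Type*} {n : ℕ} (g : (i : Fin n) → (Fin i.1 → 𝒳) → 𝒳)
    (c : Fin n → 𝒳)
    (h : ∀ i, g i (prefixVec c i.1 i.2.le) = c i) :
    ∀ k (hk : k < n), scVecGo g k hk = c ⟨k, hk⟩ := by
  intro k
  induction k using Nat.strong_induction_on with
  | _ k IH =>
    intro hk
    rw [scVecGo]
    have hpref : (fun j : Fin k => scVecGo g j.1 (j.2.trans hk)) =
        prefixVec c k hk.le := by
      funext j
      exact IH j.1 j.2 (j.2.trans hk)
    rw [hpref]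
    exact h ⟨k, hk⟩

lemma probOf_mono_union {Ω : Type*} [Fintype Ω] (p : Ω → ℝ) (hp : ∀ ω, 0 ≤ p ω)
    {ι : Type*} (s : Finset ι) (E : Set Ω) (F : ι → Set Ω)
    (h : ∀ ω ∈ E, ∃ i ∈ s, ω ∈ F i) :
    probOf p E ≤ ∑ i ∈ s, probOf p (F i) := by
  unfold probOf
  rw [Finset.sum_comm]
  apply Finset.sum_le_sum
  intro ω _
  by_cases hω : ω ∈ E
  · obtain ⟨i, hi, hFi⟩ := h ω hω
    rw [Set.indicator_of_mem hω]
    calc p ω = (F i).indicator p ω := (Set.indicator_of_mem hFi p).symm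
      _ ≤ ∑ j ∈ s, (F j).indicator p ω := by
        apply Finset.single_le_sum (fun j _ => Set.indicator_nonneg (fun x _ => hp x) ω) hi
  · rw [Set.indicator_of_notMem hω]
    exact Finset.sum_nonneg fun j _ => Set.indicator_nonneg (fun x _ => hp x) ω

/-- union bound for the SC decoder built from arbitrary per-coordinate
decision functions `f i` (used on `I0`; on `I1` the decoder copies the codeword):
`Prob(f(AX,Y) ≠ C) ≤ Σ_{i ∈ I0} Prob(f_i(C_1^{i-1}, Y) ≠ C_i)`. -/
theorem stmt2
    {𝒳 𝒴 : Type*} [Fintype 𝒳] [Fintype 𝒴]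
    (hcard : 2 ≤ Fintype.card 𝒳)
    (n l : ℕ) (hl : l ≤ n)
    (μ : ((Fin n → 𝒳) × (Fin n → 𝒴)) → ℝ)
    (hμ0 : ∀ ω, 0 ≤ μ ω) (hμ1 : ∑ ω, μ ω = 1)
    (A : (Fin n → 𝒳) → (Fin l → 𝒳)) (B : (Fin n → 𝒳) → (Fin (n - l) → 𝒳))
    (I1 I0 : Finset (Fin n))
    (hdisj : Disjoint I1 I0) (huniv : I1 ∪ I0 = Finset.univ)
    (hc1 : I1.card = l) (hc0 : I0.card = n - l)
    (T : (Fin n → 𝒳) ≃ (Fin n → 𝒳))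
    (hT1 : ∀ x (j : Fin l), T x (I1.orderIsoOfFin hc1 j).1 = A x j)
    (hT0 : ∀ x (j : Fin (n - l)), T x (I0.orderIsoOfFin hc0 j).1 = B x j)
    (f : (i : Fin n) → (Fin i.1 → 𝒳) → (Fin n → 𝒴) → 𝒳) :
    probOf μ {ω | scDec I1 hc1 f (A ω.1) ω.2 ≠ T ω.1} ≤
      ∑ i ∈ I0, probOf μ {ω | f i (prefixVec (T ω.1) i.1 i.2.le) ω.2 ≠ T ω.1 i} := by
  apply probOf_mono_union μ hμ0
  intro ω hω
  by_contra hcon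
  push_neg at hcon
  apply hω
  show scDec I1 hc1 f (A ω.1) ω.2 = T ω.1
  funext i
  apply scVecGo_eq_of _ (T ω.1) _ i.1 i.2
  intro j
  by_cases hj : j ∈ I1
  · simp only [dif_pos hj]
    have := hT1 ω.1 ((I1.orderIsoOfFin hc1).symm ⟨j, hj⟩)
    rw [OrderIso.apply_symm_apply] at this
    exact this.symm
  · have hj0 : j ∈ I0 := by
      have : j ∈ I1 ∪ I0 := huniv ▸ Finset.mem_univ j
      simpa [hj] using Finset.mem_union.mp this
    simp only [dif_neg hj]
    have := hcon j hj0
    simp only [Set.mem_setOf_eq, not_not] at this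
    exact this
end

section
/- Let Ĉ be the stochastic SC decoder (for an arbitrary partition into index sets I1, I0): a random vector on a common probability space with (X,Y) such that Ĉ_i = C_i for every i ∈ I1 and, for each i ∈ I0, conditionally on (Ĉ_1^{i−1}, Y) the symbol Ĉ_i has distribution μ_{C_i|C_1^{i−1}Y}(· | Ĉ_1^{i−1}, Y) and is conditionally independent of X. Then Prob(T^{−1}(Ĉ) ≠ X) ≤ Σ_{i∈I0} H(C_i | C_1^{i−1}, Y), where H denotes conditional Shannon entropy measured in bits (logarithm base 2). -/
/-!
If `T⁻¹(Ĉ) ≠ X` then `Ĉ ≠ C`, and at the first index `i` where they differ the decoder has seen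
the correct past `Ĉ_1^{i-1} = C_1^{i-1}`; as `Ĉ = C` on `I1`, this index lies in `I0`. So the error
probability is at most `∑_{i ∈ I0} P(Ĉ_i ≠ C_i, Ĉ_1^{i-1} = C_1^{i-1})`. On that event `Ĉ_i` is
drawn from `q = μ(· | C_1^{i-1}, Y)` independently of `X`, so given `(X, Y)` it misses `C_i` with
probability `1 - q(C_i) ≤ -log q(C_i)`; averaging this surprisal over `(X, Y)` gives
`H(C_i | C_1^{i-1}, Y)` in nats, which is at most the same entropy in bits.
-/

open Finset

section Probability

variable {Ω : Type*} [Fintype Ω] {p : Ω → ℝ}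

lemma le_probOf (hp : ∀ ω, 0 ≤ p ω) {E : Set Ω} {ω : Ω} (hω : ω ∈ E) : p ω ≤ probOf p E := by
  simpa only [probOf, Set.indicator_of_mem hω] using
    Finset.single_le_sum (f := fun ω => E.indicator p ω)
      (fun a _ => Set.indicator_nonneg (fun a _ => hp a) a) (Finset.mem_univ ω)

lemma probOf_sdiff {E F : Set Ω} (h : F ⊆ E) :
    probOf p (E \ F) = probOf p E - probOf p F := by
  simp only [probOf, Set.indicator_sdiff h, Pi.sub_apply, Finset.sum_sub_distrib]

lemma probOf_le_sum_of_subset_biUnion (hp : ∀ ω, 0 ≤ p ω) {ι : Type*} {E : Set Ω}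
    (s : Finset ι) (F : ι → Set Ω) (h : E ⊆ ⋃ i ∈ s, F i) :
    probOf p E ≤ ∑ i ∈ s, probOf p (F i) := by
  unfold probOf
  rw [Finset.sum_comm]
  refine Finset.sum_le_sum fun ω _ => ?_
  by_cases hω : ω ∈ E
  · obtain ⟨i, hi, hωi⟩ := Set.mem_iUnion₂.mp (h hω)
    rw [Set.indicator_of_mem hω]
    calc p ω = (F i).indicator p ω := (Set.indicator_of_mem hωi p).symm
      _ ≤ ∑ j ∈ s, (F j).indicator p ω :=
        Finset.single_le_sum (fun j _ => Set.indicator_nonneg (fun a _ => hp a) ω) hi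
  · rw [Set.indicator_of_notMem hω]
    exact Finset.sum_nonneg fun j _ => Set.indicator_nonneg (fun a _ => hp a) ω

lemma sum_probOf_inter_fiber {ζ : Type*} [Fintype ζ] (Z : Ω → ζ) (E : Set Ω) :
    ∑ z, probOf p ({ω | Z ω = z} ∩ E) = probOf p E := by
  unfold probOf
  rw [Finset.sum_comm]
  refine Finset.sum_congr rfl fun ω _ => ?_
  rw [Fintype.sum_eq_single (Z ω) fun z hz =>
    Set.indicator_of_notMem (fun h => hz h.1.symm) p]
  by_cases hω : ω ∈ E
  · rw [Set.indicator_of_mem (show ω ∈ {ω' | Z ω' = Z ω} ∩ E from ⟨rfl, hω⟩),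
      Set.indicator_of_mem hω]
  · rw [Set.indicator_of_notMem (fun h => hω h.2), Set.indicator_of_notMem hω]

lemma sum_mul_comp_eq_sum_probOf_mul {κ : Type*} [Fintype κ] (W : Ω → κ) (f : κ → ℝ) :
    ∑ ω, p ω * f (W ω) = ∑ w, probOf p {ω | W ω = w} * f w := by
  simp only [probOf, Finset.sum_mul]
  rw [Finset.sum_comm]
  refine Finset.sum_congr rfl fun ω _ => ?_
  rw [Fintype.sum_eq_single (W ω) fun w hw => by
    rw [Set.indicator_of_notMem (fun h => hw h.symm), zero_mul]]
  rw [Set.indicator_of_mem (show ω ∈ {ω' | W ω' = W ω} from rfl)]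

lemma condProb_nonneg (hp : ∀ ω, 0 ≤ p ω) (E F : Set Ω) : 0 ≤ condProb p E F :=
  div_nonneg (probOf_nonneg hp _) (probOf_nonneg hp _)

lemma condProb_le_one (hp : ∀ ω, 0 ≤ p ω) (E F : Set Ω) : condProb p E F ≤ 1 :=
  div_le_one_of_le₀ (probOf_mono hp Set.inter_subset_right) (probOf_nonneg hp _)

end Probability

section Entropy

variable {Ω α κ : Type*} [Fintype Ω] [Fintype α] [Fintype κ] {p : Ω → ℝ}

lemma entropyOf_eq_sum_mul_neg_log (W : Ω → κ) :
    entropyOf p W = ∑ ω, p ω * -Real.log (probOf p {ω' | W ω' = W ω}) := by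
  rw [sum_mul_comp_eq_sum_probOf_mul W fun w => -Real.log (probOf p {ω' | W ω' = w})]
  simp only [entropyOf, Real.negMulLog, neg_mul, mul_neg]

lemma condEntropyOf_eq_sum_mul_neg_log_condProb (hp : ∀ ω, 0 ≤ p ω) (U : Ω → α) (V : Ω → κ) :
    condEntropyOf p U V =
      ∑ ω, p ω * -Real.log (condProb p {ω' | U ω' = U ω} {ω' | V ω' = V ω}) := by
  rw [condEntropyOf, entropyOf_eq_sum_mul_neg_log, entropyOf_eq_sum_mul_neg_log,
    ← Finset.sum_sub_distrib]
  refine Finset.sum_congr rfl fun ω _ => ?_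
  have hjoint : {ω' | (U ω', V ω') = (U ω, V ω)} = {ω' | U ω' = U ω} ∩ {ω' | V ω' = V ω} := by
    ext ω'
    exact Prod.ext_iff
  rcases (hp ω).eq_or_lt with hω | hω
  · simp only [← hω, zero_mul, sub_zero]
  have hUV : 0 < probOf p ({ω' | U ω' = U ω} ∩ {ω' | V ω' = V ω}) :=
    hω.trans_le (le_probOf hp ⟨rfl, rfl⟩)
  have hV : 0 < probOf p {ω' | V ω' = V ω} := hω.trans_le (le_probOf hp rfl)
  rw [hjoint, condProb, Real.log_div hUV.ne' hV.ne']
  ring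

lemma condEntropyOf_nonneg (hp : ∀ ω, 0 ≤ p ω) (U : Ω → α) (V : Ω → κ) :
    0 ≤ condEntropyOf p U V := by
  rw [condEntropyOf_eq_sum_mul_neg_log_condProb hp]
  exact Finset.sum_nonneg fun ω _ => mul_nonneg (hp ω) <| neg_nonneg.mpr <|
    Real.log_nonpos (condProb_nonneg hp _ _) (condProb_le_one hp _ _)

end Entropy

section DecodingError

variable {Ω ζ α κ : Type*} [Fintype Ω] {p : Ω → ℝ}
  {Z : Ω → ζ} {F : ζ → α} {G : ζ → κ} {Uhat : Ω → α} {Vhat : Ω → κ}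

lemma probOf_fiber_inter_ne_and_eq_le (hp : ∀ ω, 0 ≤ p ω) (z : ζ)
    (h : 0 < probOf p {ω | G (Z ω) = G z} →
      probOf p {ω | Uhat ω = F z ∧ Z ω = z ∧ Vhat ω = G z} =
        condProb p {ω | F (Z ω) = F z} {ω | G (Z ω) = G z} *
          probOf p {ω | Z ω = z ∧ Vhat ω = G z}) :
    probOf p ({ω | Z ω = z} ∩ {ω | Uhat ω ≠ F (Z ω) ∧ Vhat ω = G (Z ω)}) ≤
      probOf p {ω | Z ω = z} *
        -Real.log (condProb p {ω | F (Z ω) = F z} {ω | G (Z ω) = G z}) := by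
  set q := condProb p {ω | F (Z ω) = F z} {ω | G (Z ω) = G z}
  rcases (probOf_nonneg hp {ω | Z ω = z}).eq_or_lt with h0 | hpos
  · rw [← h0, zero_mul, h0]
    exact probOf_mono hp Set.inter_subset_left
  have hZ : {ω | Z ω = z} ⊆ {ω | F (Z ω) = F z} ∩ {ω | G (Z ω) = G z} := fun ω hω =>
    ⟨congrArg F hω, congrArg G hω⟩
  have hG : 0 < probOf p {ω | G (Z ω) = G z} :=
    hpos.trans_le (probOf_mono hp (hZ.trans Set.inter_subset_right))
  have hq : 0 < q := div_pos (hpos.trans_le (probOf_mono hp hZ)) hG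
  have hsplit : {ω | Z ω = z} ∩ {ω | Uhat ω ≠ F (Z ω) ∧ Vhat ω = G (Z ω)} =
      {ω | Z ω = z ∧ Vhat ω = G z} \ {ω | Uhat ω = F z ∧ Z ω = z ∧ Vhat ω = G z} := by
    ext ω
    constructor
    · rintro ⟨rfl, hne, hV⟩
      exact ⟨⟨rfl, hV⟩, fun h => hne h.1⟩
    · rintro ⟨⟨rfl, hV⟩, hne⟩
      exact ⟨rfl, fun h => hne ⟨h, rfl, hV⟩, hV⟩
  calc _ = (1 - q) * probOf p {ω | Z ω = z ∧ Vhat ω = G z} := by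
        rw [hsplit, probOf_sdiff fun ω hω => hω.2, h hG]
        ring
    _ ≤ (1 - q) * probOf p {ω | Z ω = z} :=
        mul_le_mul_of_nonneg_left (probOf_mono hp fun ω hω => hω.1)
          (sub_nonneg.mpr (condProb_le_one hp _ _))
    _ ≤ probOf p {ω | Z ω = z} * -Real.log q := by
        rw [mul_comm]
        gcongr
        linarith [Real.log_le_sub_one_of_pos hq]

/-- `Vhat` estimates the context `G ∘ Z`, and `Uhat` is drawn, independently of `Z`, from the
posterior of `F ∘ Z` given the context, evaluated at the estimate `Vhat`. -/
theorem probOf_ne_and_eq_le_condEntropyOf [Fintype ζ] [Fintype α] [Fintype κ]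
    (hp : ∀ ω, 0 ≤ p ω)
    (h : ∀ z, 0 < probOf p {ω | G (Z ω) = G z} →
      probOf p {ω | Uhat ω = F z ∧ Z ω = z ∧ Vhat ω = G z} =
        condProb p {ω | F (Z ω) = F z} {ω | G (Z ω) = G z} *
          probOf p {ω | Z ω = z ∧ Vhat ω = G z}) :
    probOf p {ω | Uhat ω ≠ F (Z ω) ∧ Vhat ω = G (Z ω)} ≤
      condEntropyOf p (fun ω => F (Z ω)) (fun ω => G (Z ω)) :=
  calc _ = ∑ z, probOf p ({ω | Z ω = z} ∩ {ω | Uhat ω ≠ F (Z ω) ∧ Vhat ω = G (Z ω)}) :=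
        (sum_probOf_inter_fiber Z _).symm
    _ ≤ ∑ z, probOf p {ω | Z ω = z} *
          -Real.log (condProb p {ω | F (Z ω) = F z} {ω | G (Z ω) = G z}) :=
        Finset.sum_le_sum fun z _ => probOf_fiber_inter_ne_and_eq_le hp z (h z)
    _ = ∑ ω, p ω * -Real.log
          (condProb p {ω' | F (Z ω') = F (Z ω)} {ω' | G (Z ω') = G (Z ω)}) :=
        (sum_mul_comp_eq_sum_probOf_mul Z _).symm
    _ = _ := (condEntropyOf_eq_sum_mul_neg_log_condProb hp _ _).symm

end DecodingError

section SuccessiveCancellation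

variable {Ω 𝒳 𝒴 : Type*} [Fintype Ω] {p : Ω → ℝ} {n : ℕ}

lemma exists_ne_and_prefixVec_eq {c d : Fin n → 𝒳} (h : c ≠ d) :
    ∃ i : Fin n, c i ≠ d i ∧ prefixVec c i.1 i.2.le = prefixVec d i.1 i.2.le := by
  have hne : {i | c i ≠ d i}.Nonempty := Function.ne_iff.mp h
  refine ⟨wellFounded_lt.min _ hne, wellFounded_lt.min_mem _ hne, funext fun k => ?_⟩
  by_contra hk
  exact wellFounded_lt.not_lt_min {i | c i ≠ d i} hk k.2

lemma probOf_ne_le_sum_probOf_first_ne (hp : ∀ ω, 0 ≤ p ω) {c chat : Ω → Fin n → 𝒳}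
    {S : Finset (Fin n)} (hS : ∀ ω, ∀ i ∉ S, chat ω i = c ω i) :
    probOf p {ω | chat ω ≠ c ω} ≤ ∑ i ∈ S, probOf p {ω | chat ω i ≠ c ω i ∧
      prefixVec (chat ω) i.1 i.2.le = prefixVec (c ω) i.1 i.2.le} := by
  refine probOf_le_sum_of_subset_biUnion hp S _ fun ω hω => ?_
  obtain ⟨i, hi, hpre⟩ := exists_ne_and_prefixVec_eq hω
  exact Set.mem_iUnion₂.mpr ⟨i, by_contra fun hiS => hi (hS ω i hiS), hi, hpre⟩

lemma probOf_first_ne_le_condEntropyOf [Fintype 𝒳] [Fintype 𝒴] (hp : ∀ ω, 0 ≤ p ω)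
    (X Chat : Ω → Fin n → 𝒳) (Y : Ω → Fin n → 𝒴) (T : (Fin n → 𝒳) → Fin n → 𝒳) (i : Fin n)
    (hstep : ∀ (cp : Fin i.1 → 𝒳) (y : Fin n → 𝒴),
      0 < probOf p {ω | prefixVec (T (X ω)) i.1 i.2.le = cp ∧ Y ω = y} →
      ∀ (a : 𝒳) (x : Fin n → 𝒳),
        probOf p {ω | Chat ω i = a ∧ X ω = x ∧ prefixVec (Chat ω) i.1 i.2.le = cp ∧ Y ω = y} =
          condProb p {ω | T (X ω) i = a}
              {ω | prefixVec (T (X ω)) i.1 i.2.le = cp ∧ Y ω = y} *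
            probOf p {ω | X ω = x ∧ prefixVec (Chat ω) i.1 i.2.le = cp ∧ Y ω = y}) :
    probOf p {ω | Chat ω i ≠ T (X ω) i ∧
        prefixVec (Chat ω) i.1 i.2.le = prefixVec (T (X ω)) i.1 i.2.le} ≤
      condEntropyOf p (fun ω => T (X ω) i)
        (fun ω => (prefixVec (T (X ω)) i.1 i.2.le, Y ω)) := by
  have key := probOf_ne_and_eq_le_condEntropyOf (Z := fun ω => (X ω, Y ω))
    (F := fun z => T z.1 i) (G := fun z => (prefixVec (T z.1) i.1 i.2.le, z.2))
    (Uhat := fun ω => Chat ω i) (Vhat := fun ω => (prefixVec (Chat ω) i.1 i.2.le, Y ω)) hp ?_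
  · simpa only [Prod.mk.injEq, and_true] using key
  · rintro ⟨x, y⟩ hpos
    simp only [Prod.mk.injEq] at hpos ⊢
    convert hstep _ y hpos (T x i) x using 3
    · ext ω
      tauto
    · ext ω
      simp only [Set.mem_ofPred_eq]
      tauto

end SuccessiveCancellation

theorem stmt7_general
    {Ω 𝒳 𝒴 : Type*} [Fintype Ω] [Fintype 𝒳] [Fintype 𝒴]
    (n : ℕ)
    (p : Ω → ℝ) (hp0 : ∀ ω, 0 ≤ p ω)
    (X : Ω → (Fin n → 𝒳)) (Y : Ω → (Fin n → 𝒴)) (Chat : Ω → (Fin n → 𝒳))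
    (I1 I0 : Finset (Fin n))
    (huniv : I1 ∪ I0 = Finset.univ)
    (T : (Fin n → 𝒳) ≃ (Fin n → 𝒳))
    (hkeep : ∀ ω, ∀ i ∈ I1, Chat ω i = T (X ω) i)
    (hstep : ∀ i ∈ I0, ∀ (cp : Fin i.1 → 𝒳) (y : Fin n → 𝒴),
      0 < probOf p {ω | prefixVec (T (X ω)) i.1 i.2.le = cp ∧ Y ω = y} →
      ∀ (a : 𝒳) (x : Fin n → 𝒳),
        probOf p {ω | Chat ω i = a ∧ X ω = x ∧ prefixVec (Chat ω) i.1 i.2.le = cp ∧ Y ω = y} =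
          condProb p {ω | T (X ω) i = a}
              {ω | prefixVec (T (X ω)) i.1 i.2.le = cp ∧ Y ω = y} *
            probOf p {ω | X ω = x ∧ prefixVec (Chat ω) i.1 i.2.le = cp ∧ Y ω = y}) :
    probOf p {ω | T.symm (Chat ω) ≠ X ω} ≤
      ∑ i ∈ I0,
        condEntropyOf p (fun ω => T (X ω) i)
          (fun ω => (prefixVec (T (X ω)) i.1 i.2.le, Y ω)) / Real.log 2 := by
  have hI1 : ∀ i ∉ I0, i ∈ I1 := fun i hi =>
    (Finset.mem_union.mp (huniv ▸ Finset.mem_univ i)).resolve_right hi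
  have hlog2 : 0 < Real.log 2 := Real.log_pos one_lt_two
  calc probOf p {ω | T.symm (Chat ω) ≠ X ω} = probOf p {ω | Chat ω ≠ T (X ω)} := by
        simp only [Ne, Equiv.symm_apply_eq]
    _ ≤ _ := probOf_ne_le_sum_probOf_first_ne hp0 fun ω i hi => hkeep ω i (hI1 i hi)
    _ ≤ _ := Finset.sum_le_sum fun i hi =>
        (probOf_first_ne_le_condEntropyOf hp0 X Chat Y T i (hstep i hi)).trans <|
          le_div_self (condEntropyOf_nonneg hp0 _ _) hlog2 (by linarith [Real.log_two_lt_d9])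

/-- for an arbitrary partition `(I1, I0)`, the stochastic SC decoder `Ĉ`
(with `Ĉ_i = C_i` on `I1` and, on `I0`, sampling from `μ_{C_i|C_1^{i-1}Y}(·|Ĉ_1^{i-1},Y)`
conditionally independently of `X`) satisfies
`Prob(T⁻¹(Ĉ) ≠ X) ≤ Σ_{i ∈ I0} H(C_i | C_1^{i-1}, Y)` with entropy in bits. -/
theorem stmt7
    {Ω 𝒳 𝒴 : Type*} [Fintype Ω] [Fintype 𝒳] [Fintype 𝒴]
    (hcard : 2 ≤ Fintype.card 𝒳)
    (n l : ℕ) (hl : l ≤ n)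
    (p : Ω → ℝ) (hp0 : ∀ ω, 0 ≤ p ω) (hp1 : ∑ ω, p ω = 1)
    (X : Ω → (Fin n → 𝒳)) (Y : Ω → (Fin n → 𝒴)) (Chat : Ω → (Fin n → 𝒳))
    (A : (Fin n → 𝒳) → (Fin l → 𝒳)) (B : (Fin n → 𝒳) → (Fin (n - l) → 𝒳))
    (I1 I0 : Finset (Fin n))
    (hdisj : Disjoint I1 I0) (huniv : I1 ∪ I0 = Finset.univ)
    (hc1 : I1.card = l) (hc0 : I0.card = n - l)
    (T : (Fin n → 𝒳) ≃ (Fin n → 𝒳))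
    (hT1 : ∀ x (j : Fin l), T x (I1.orderIsoOfFin hc1 j).1 = A x j)
    (hT0 : ∀ x (j : Fin (n - l)), T x (I0.orderIsoOfFin hc0 j).1 = B x j)
    (hkeep : ∀ ω, ∀ i ∈ I1, Chat ω i = T (X ω) i)
    (hstep : ∀ i ∈ I0, ∀ (cp : Fin i.1 → 𝒳) (y : Fin n → 𝒴),
      0 < probOf p {ω | prefixVec (T (X ω)) i.1 i.2.le = cp ∧ Y ω = y} →
      ∀ (a : 𝒳) (x : Fin n → 𝒳),
        probOf p {ω | Chat ω i = a ∧ X ω = x ∧ prefixVec (Chat ω) i.1 i.2.le = cp ∧ Y ω = y} =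
          condProb p {ω | T (X ω) i = a}
              {ω | prefixVec (T (X ω)) i.1 i.2.le = cp ∧ Y ω = y} *
            probOf p {ω | X ω = x ∧ prefixVec (Chat ω) i.1 i.2.le = cp ∧ Y ω = y}) :
    probOf p {ω | T.symm (Chat ω) ≠ X ω} ≤
      ∑ i ∈ I0,
        condEntropyOf p (fun ω => T (X ω) i)
          (fun ω => (prefixVec (T (X ω)) i.1 i.2.le, Y ω)) / Real.log 2 :=
  stmt7_general n p hp0 X Y Chat I1 I0 huniv T hkeep hstep
end

section
/- Assume additionally that (X,Y) is memoryless, i.e. Prob(X = x, Y = y) = Π_{k=1}^n p_k(x_k, y_k) for pmfs p_k on 𝒳 × 𝒴. Then for every j ∈ {1,…,n−l}, every c ∈ 𝒳^l, every x_1^j ∈ 𝒳^j, and every y ∈ 𝒴^n such that Prob(AX = c, X_1^{j−1} = x_1^{j−1}, Y = y) > 0, the SC conditional probability satisfies μ_{C_{l+j}|C_1^{l+j−1}Y}(x_j | (c, x_1^{j−1}), y) = [Σ over x_{j+1},…,x_n of (Π_{k=j}^n Prob(X_k = x_k | Y_k = y_k))·χ(A_j^n x_j^n = c − A_1^{j−1}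 x_1^{j−1})] / [Σ over x_j,…,x_n of (Π_{k=j}^n Prob(X_k = x_k | Y_k = y_k))·χ(A_j^n x_j^n = c − A_1^{j−1} x_1^{j−1})], where A_1^{j−1} is the submatrix of A formed by columns 1,…,j−1, A_j^n is the submatrix formed by columns j,…,n, and χ is the indicator function. -/
open Finset

/-- The extended codeword of `x`: first `l` coordinates are `A x`, the remaining
coordinates are `x₁, …, x_{n−l}` (0-indexed: `C i = x (i − l)` for `i ≥ l`). -/
def Cword {𝒳 : Type*} [Field 𝒳] {n l : ℕ} (hl : l ≤ n)
    (A : Matrix (Fin l) (Fin n) 𝒳) (x : Fin n → 𝒳) : Fin n → 𝒳 :=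
  fun i => if h : i.1 < l then A.mulVec x ⟨i.1, h⟩ else x ⟨i.1 - l, by have := i.2; omega⟩

/-!
Conditioning on `Y = y` and on the codeword prefix `(c, x_1^{j-1})` fixes the coordinates
`X_1^{j-1}` and turns `A X = c` into the linear constraint
`A_j^n X_j^n = c - A_1^{j-1} x_1^{j-1}` on the remaining ones. A memoryless pmf factors as
`μ(x, y) = (∏ₖ Prob(Y_k = y_k)) · ∏ₖ Prob(X_k = x_k | Y_k = y_k)`, so the probabilities of
the joint event and of the conditioning event are one common factor (coming from `y` and the
fixed coordinates) times the two sums of the statement. The factor is positive because the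
conditioning event has positive probability, and it cancels.
-/

lemma probOf_setOf_and_snd_eq {α β : Type*} [Fintype α] [Fintype β] (p : α × β → ℝ)
    (C : α → Prop) [DecidablePred C] (b : β) :
    probOf p {ω | C ω.1 ∧ ω.2 = b} = ∑ a, if C a then p (a, b) else 0 := by
  classical
  simp [probOf, Set.indicator_apply, Fintype.sum_prod_type, ite_and]

lemma Fintype.sum_pi_ite_mem_prod {ι κ : Type*} [Fintype ι] [DecidableEq ι] [Fintype κ]
    [DecidableEq κ]
    (f : ι → κ → ℝ) (hf : ∀ i, ∑ w, f i w = 1) (k : ι) (s : Finset κ) :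
    ∑ z : ι → κ, (if z k ∈ s then ∏ i, f i (z i) else 0) = ∑ w ∈ s, f k w := by
  set g := Function.update f k (fun w => if w ∈ s then f k w else 0)
  have hg : ∀ i ∈ ({k}ᶜ : Finset ι), g i = f i := fun i hi =>
    Function.update_of_ne (by simpa using hi) _ _
  have hprod : ∀ z : ι → κ, (if z k ∈ s then ∏ i, f i (z i) else 0) = ∏ i, g i (z i) := by
    intro z
    have hrest : ∏ i ∈ {k}ᶜ, g i (z i) = ∏ i ∈ {k}ᶜ, f i (z i) :=
      Finset.prod_congr rfl fun i hi => by rw [hg i hi]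
    rw [Fintype.prod_eq_mul_prod_compl k, Fintype.prod_eq_mul_prod_compl k, hrest]
    simp [g, ite_mul]
  have hrest : ∏ i ∈ {k}ᶜ, ∑ w, g i w = 1 :=
    Finset.prod_eq_one fun i hi => by rw [hg i hi, hf]
  rw [Fintype.sum_congr _ _ hprod, ← Fintype.prod_sum, Fintype.prod_eq_mul_prod_compl k, hrest]
  simp [g, Finset.sum_ite_mem]

lemma Fin.sum_filter_val_lt {M : Type*} [AddCommMonoid M] {n m : ℕ} (hm : m ≤ n)
    (f : Fin n → M) :
    ∑ k ∈ univ.filter (fun k : Fin n => k.1 < m), f k = ∑ k : Fin m, f ⟨k.1, by omega⟩ := by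
  have hmap : univ.filter (fun k : Fin n => k.1 < m) = univ.map (Fin.castLEEmb hm) := by
    ext k
    simp only [mem_filter, mem_univ, true_and, mem_map, Fin.castLEEmb_apply]
    exact ⟨fun h => ⟨⟨k, h⟩, rfl⟩, fun ⟨a, ha⟩ => ha ▸ a.2⟩
  rw [hmap, Finset.sum_map]
  rfl

lemma sum_ite_prod_eq_mul_of_eqOn_compl {ι κ : Type*} [Fintype ι] [DecidableEq ι] [Fintype κ]
    (g : ι → κ → ℝ) (S : Finset ι) (x₀ : ι → κ) (C : (ι → κ) → Prop) [DecidablePred C]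
    (hC : ∀ x, C x → ∀ k ∉ S, x k = x₀ k) :
    ∑ x, (if C x then ∏ k, g k (x k) else 0) =
      (∏ k ∈ Sᶜ, g k (x₀ k)) * ∑ x, if C x then ∏ k ∈ S, g k (x k) else 0 := by
  rw [mul_sum]
  refine sum_congr rfl fun x _ => ?_
  split_ifs with hx
  · rw [← prod_mul_prod_compl S, mul_comm]
    congr 1
    exact prod_congr rfl fun k hk => by rw [hC x hx k (mem_compl.1 hk)]
  · rw [mul_zero]

section Memoryless

variable {ι 𝒳 𝒴 : Type*} [Fintype ι] [DecidableEq ι] [Fintype 𝒳] [Fintype 𝒴]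
  {μ : (ι → 𝒳) × (ι → 𝒴) → ℝ} {pk : ι → 𝒳 × 𝒴 → ℝ}

lemma probOf_coord_mem_of_memoryless (hpk1 : ∀ k, ∑ z, pk k z = 1)
    (hmem : ∀ x y, μ (x, y) = ∏ k, pk k (x k, y k)) (k : ι) (s : Finset (𝒳 × 𝒴)) :
    probOf μ {ω | (ω.1 k, ω.2 k) ∈ s} = ∑ w ∈ s, pk k w := by
  classical
  rw [probOf, ← (Equiv.arrowProdEquivProdArrow ι (fun _ => 𝒳) (fun _ => 𝒴)).sum_comp,
    ← Fintype.sum_pi_ite_mem_prod pk hpk1 k s]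
  simp [Equiv.arrowProdEquivProdArrow, Set.indicator_apply, hmem]

lemma condProb_coord_of_memoryless (hpk1 : ∀ k, ∑ z, pk k z = 1)
    (hmem : ∀ x y, μ (x, y) = ∏ k, pk k (x k, y k)) (k : ι) (a : 𝒳) (b : 𝒴) :
    condProb μ {ω | ω.1 k = a} {ω | ω.2 k = b} = pk k (a, b) / ∑ a', pk k (a', b) := by
  classical
  have hnum := probOf_coord_mem_of_memoryless hpk1 hmem k {(a, b)}
  have hden := probOf_coord_mem_of_memoryless hpk1 hmem k (univ.filter (·.2 = b))
  simp only [mem_singleton, Prod.ext_iff, mem_filter, mem_univ, true_and] at hnum hden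
  rw [condProb, ← Set.ofPred_and, hnum, hden, sum_singleton, sum_filter, Fintype.sum_prod_type]
  simp

lemma pk_eq_mul_condProb_of_memoryless (hpk0 : ∀ k z, 0 ≤ pk k z)
    (hpk1 : ∀ k, ∑ z, pk k z = 1) (hmem : ∀ x y, μ (x, y) = ∏ k, pk k (x k, y k))
    (k : ι) (a : 𝒳) (b : 𝒴) :
    pk k (a, b) = (∑ a', pk k (a', b)) * condProb μ {ω | ω.1 k = a} {ω | ω.2 k = b} := by
  rw [condProb_coord_of_memoryless hpk1 hmem]
  rcases eq_or_ne (∑ a', pk k (a', b)) 0 with hq | hq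
  · -- `condProb` is the junk value `0 / 0` here, but `pk k (a, b)` vanishes too.
    rw [hq, zero_mul]
    exact (sum_eq_zero_iff_of_nonneg fun a' _ => hpk0 k (a', b)).1 hq a (mem_univ a)
  · field_simp

lemma memoryless_apply_eq_mul_prod_condProb (hpk0 : ∀ k z, 0 ≤ pk k z)
    (hpk1 : ∀ k, ∑ z, pk k z = 1) (hmem : ∀ x y, μ (x, y) = ∏ k, pk k (x k, y k))
    (x : ι → 𝒳) (y : ι → 𝒴) :
    μ (x, y) = (∏ k, ∑ a, pk k (a, y k)) *
      ∏ k, condProb μ {ω | ω.1 k = x k} {ω | ω.2 k = y k} := by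
  rw [hmem, ← prod_mul_distrib]
  exact prod_congr rfl fun k _ => pk_eq_mul_condProb_of_memoryless hpk0 hpk1 hmem k _ _

theorem condProb_eq_div_of_memoryless (hpk0 : ∀ k z, 0 ≤ pk k z)
    (hpk1 : ∀ k, ∑ z, pk k z = 1) (hmem : ∀ x y, μ (x, y) = ∏ k, pk k (x k, y k))
    {E F : Set ((ι → 𝒳) × (ι → 𝒴))} {cN cD : (ι → 𝒳) → Prop}
    [DecidablePred cN] [DecidablePred cD] {y : ι → 𝒴} {S : Finset ι} {x₀ : ι → 𝒳}
    (hEF : E ∩ F = {ω | cN ω.1 ∧ ω.2 = y}) (hF : F = {ω | cD ω.1 ∧ ω.2 = y})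
    (hD : ∀ x, cD x → ∀ k ∉ S, x k = x₀ k)
    (hpos : 0 < probOf μ F) :
    condProb μ E F =
      (∑ x, if cN x then ∏ k ∈ S, condProb μ {ω | ω.1 k = x k} {ω | ω.2 k = y k} else 0) /
      (∑ x, if cD x then ∏ k ∈ S, condProb μ {ω | ω.1 k = x k} {ω | ω.2 k = y k} else 0) := by
  classical
  have hN : ∀ x, cN x → ∀ k ∉ S, x k = x₀ k := by
    intro x hx
    have hxF : (x, y) ∈ F := (hEF.symm ▸ ⟨hx, rfl⟩ : (x, y) ∈ E ∩ F).2
    rw [hF] at hxF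
    exact hD x hxF.1
  set K := (∏ k, ∑ a, pk k (a, y k)) *
    ∏ k ∈ Sᶜ, condProb μ {ω | ω.1 k = x₀ k} {ω | ω.2 k = y k} with hK
  have hprob : ∀ (C : (ι → 𝒳) → Prop) [DecidablePred C], (∀ x, C x → ∀ k ∉ S, x k = x₀ k) →
      probOf μ {ω | C ω.1 ∧ ω.2 = y} = K *
        ∑ x, if C x then ∏ k ∈ S, condProb μ {ω | ω.1 k = x k} {ω | ω.2 k = y k} else 0 := by
    intro C _ hC
    simp_rw [probOf_setOf_and_snd_eq, memoryless_apply_eq_mul_prod_condProb hpk0 hpk1 hmem]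
    rw [hK, mul_assoc, ← sum_ite_prod_eq_mul_of_eqOn_compl
      (fun k a => condProb μ {ω | ω.1 k = a} {ω | ω.2 k = y k}) S x₀ C hC, mul_sum]
    simp_rw [mul_ite, mul_zero]
  rw [hF, hprob cD hD] at hpos
  rw [condProb, hEF, hF, hprob cN hN, hprob cD hD]
  exact mul_div_mul_left _ _ (left_ne_zero_of_mul hpos.ne')

end Memoryless

lemma Fin.forall_iff_last_and_init {j : ℕ} (hj : 1 ≤ j) (P : Fin j → Prop) :
    (∀ k, P k) ↔ P ⟨j - 1, by omega⟩ ∧ ∀ k : Fin (j - 1), P ⟨k.1, by omega⟩ := by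
  refine ⟨fun h => ⟨h _, fun k => h _⟩, fun ⟨hlast, hinit⟩ k => ?_⟩
  rcases Nat.lt_or_ge k.1 (j - 1) with hk | hk
  · exact hinit ⟨k.1, hk⟩
  · have hk' : k = ⟨j - 1, by omega⟩ := Fin.ext (show k.1 = j - 1 by omega)
    exact hk' ▸ hlast

section ExtendedCodeword

variable {𝒳 : Type*} [Field 𝒳] {n l : ℕ} (hl : l ≤ n) (A : Matrix (Fin l) (Fin n) 𝒳)
  (x : Fin n → 𝒳)

lemma Cword_apply_of_val_eq_add (i : Fin n) (m : ℕ) (hi : i.1 = l + m) :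
    Cword hl A x i = x ⟨m, by omega⟩ := by
  rw [Cword, dif_neg (by omega)]
  congr
  omega

lemma mulVec_eq_iff_of_prefix {m : ℕ} (hm : m ≤ n) (c : Fin l → 𝒳) (u : Fin m → 𝒳)
    (hx : ∀ k : Fin m, x ⟨k.1, by omega⟩ = u k) :
    A.mulVec x = c ↔ ∀ r, ∑ k ∈ univ.filter (fun k : Fin n => m ≤ k.1), A r k * x k =
      c r - ∑ k : Fin m, A r ⟨k.1, by omega⟩ * u k := by
  refine funext_iff.trans (forall_congr' fun r => ?_)
  have hsplit :=
    sum_filter_add_sum_filter_not univ (fun k : Fin n => k.1 < m) fun k => A r k * x k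
  simp only [not_lt, Fin.sum_filter_val_lt hm, hx] at hsplit
  rw [Matrix.mulVec, dotProduct, ← hsplit, eq_sub_iff_add_eq', add_comm]

lemma prefixVec_Cword_eq_iff {j : ℕ} (hj1 : 1 ≤ j) (hj : l + j - 1 ≤ n) (c : Fin l → 𝒳)
    (xs : Fin j → 𝒳) :
    prefixVec (Cword hl A x) (l + j - 1) hj =
        (fun k : Fin (l + j - 1) =>
          if h : k.1 < l then c ⟨k.1, h⟩ else xs ⟨k.1 - l, by omega⟩) ↔
      A.mulVec x = c ∧ ∀ k : Fin (j - 1), x ⟨k.1, by omega⟩ = xs ⟨k.1, by omega⟩ := by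
  simp only [funext_iff, Fin.forall_iff, prefixVec, Cword]
  refine ⟨fun h => ⟨fun r hr => ?_, fun k hk => ?_⟩, fun ⟨hc, hxs⟩ i hi => ?_⟩
  · simpa [hr] using h r (by omega)
  · simpa using h (l + k) (by omega)
  · split_ifs with hil
    · exact hc i hil
    · exact hxs (i - l) (by omega)

lemma prefixVec_Cword_eq_iff_init_and_tail {j : ℕ} (hj1 : 1 ≤ j) (hj : l + j - 1 ≤ n)
    (c : Fin l → 𝒳) (xs : Fin j → 𝒳) :
    prefixVec (Cword hl A x) (l + j - 1) hj =
        (fun k : Fin (l + j - 1) =>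
          if h : k.1 < l then c ⟨k.1, h⟩ else xs ⟨k.1 - l, by omega⟩) ↔
      (∀ k : Fin (j - 1), x ⟨k.1, by omega⟩ = xs ⟨k.1, by omega⟩) ∧
        ∀ r, ∑ k ∈ univ.filter (fun k : Fin n => j - 1 ≤ k.1), A r k * x k =
          c r - ∑ k : Fin (j - 1), A r ⟨k.1, by omega⟩ * xs ⟨k.1, by omega⟩ :=
  (prefixVec_Cword_eq_iff hl A x hj1 hj c xs).trans <| and_comm.trans <|
    and_congr_right fun hx => mulVec_eq_iff_of_prefix A x (by omega) c _ hx

end ExtendedCodeword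

/-- when `(X,Y)` is memoryless, the SC conditional probability
`μ_{C_{l+j}|C_1^{l+j−1}Y}(x_j | (c, x_1^{j−1}), y)` equals
`[Σ_{x_{j+1}…x_n} (Π_{k=j}^n Prob(X_k = x_k|Y_k = y_k)) χ(A_j^n x_j^n = c − A_1^{j−1} x_1^{j−1})]
 / [Σ_{x_j…x_n} (Π_{k=j}^n Prob(X_k = x_k|Y_k = y_k)) χ(A_j^n x_j^n = c − A_1^{j−1} x_1^{j−1})]`. -/
theorem stmt18
    {𝒳 𝒴 : Type*} [Field 𝒳] [Fintype 𝒳] [DecidableEq 𝒳] [Fintype 𝒴]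
    (n l : ℕ) (hl : l ≤ n)
    (μ : ((Fin n → 𝒳) × (Fin n → 𝒴)) → ℝ)
    (pk : Fin n → 𝒳 × 𝒴 → ℝ)
    (hpk0 : ∀ k z, 0 ≤ pk k z) (hpk1 : ∀ k, ∑ z, pk k z = 1)
    (hmem : ∀ (x : Fin n → 𝒳) (y : Fin n → 𝒴), μ (x, y) = ∏ k, pk k (x k, y k))
    (A : Matrix (Fin l) (Fin n) 𝒳)
    (j : ℕ) (hj1 : 1 ≤ j) (hj2 : j ≤ n - l)
    (c : Fin l → 𝒳) (xs : Fin j → 𝒳) (y : Fin n → 𝒴)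
    (hpos : 0 < probOf μ {ω | A.mulVec ω.1 = c ∧
      (∀ k : Fin (j - 1),
        ω.1 ⟨k.1, by have := k.2; omega⟩ = xs ⟨k.1, by have := k.2; omega⟩) ∧
      ω.2 = y}) :
    condProb μ
        {ω | Cword hl A ω.1 ⟨l + j - 1, by omega⟩ = xs ⟨j - 1, by omega⟩}
        {ω | prefixVec (Cword hl A ω.1) (l + j - 1) (by omega) =
            (fun k : Fin (l + j - 1) =>
              if h : k.1 < l then c ⟨k.1, h⟩
              else xs ⟨k.1 - l, by have := k.2; omega⟩) ∧
          ω.2 = y} =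
      (∑ x : Fin n → 𝒳,
          if (∀ k : Fin j, x ⟨k.1, by have := k.2; omega⟩ = xs k) ∧
              (∀ r : Fin l,
                ∑ k ∈ Finset.univ.filter (fun k : Fin n => j - 1 ≤ k.1), A r k * x k =
                  c r - ∑ k : Fin (j - 1),
                    A r ⟨k.1, by have := k.2; omega⟩ * xs ⟨k.1, by have := k.2; omega⟩) then
            ∏ k ∈ Finset.univ.filter (fun k : Fin n => j - 1 ≤ k.1),
              condProb μ {ω | ω.1 k = x k} {ω | ω.2 k = y k}
          else 0) /
        (∑ x : Fin n → 𝒳,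
          if (∀ k : Fin (j - 1),
                x ⟨k.1, by have := k.2; omega⟩ = xs ⟨k.1, by have := k.2; omega⟩) ∧
              (∀ r : Fin l,
                ∑ k ∈ Finset.univ.filter (fun k : Fin n => j - 1 ≤ k.1), A r k * x k =
                  c r - ∑ k : Fin (j - 1),
                    A r ⟨k.1, by have := k.2; omega⟩ * xs ⟨k.1, by have := k.2; omega⟩) then
            ∏ k ∈ Finset.univ.filter (fun k : Fin n => j - 1 ≤ k.1),
              condProb μ {ω | ω.1 k = x k} {ω | ω.2 k = y k}
          else 0) := by
  refine condProb_eq_div_of_memoryless hpk0 hpk1 hmem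
    (x₀ := fun k => if h : k.1 < j then xs ⟨k.1, h⟩ else 0) ?_ ?_ ?_ ?_
  · ext ω
    simp only [Set.mem_inter_iff, Set.mem_ofPred_eq,
      prefixVec_Cword_eq_iff_init_and_tail hl A _ hj1,
      Cword_apply_of_val_eq_add hl A _ ⟨l + j - 1, by omega⟩ (j - 1) (by dsimp only; omega),
      Fin.forall_iff_last_and_init hj1]
    tauto
  · ext ω
    simp only [Set.mem_ofPred_eq, prefixVec_Cword_eq_iff_init_and_tail hl A _ hj1]
  · rintro x ⟨hx, -⟩ k hk
    have hkj : k.1 < j - 1 := by simpa only [mem_filter, mem_univ, true_and, not_le] using hk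
    rw [dif_pos (by omega)]
    exact hx ⟨k, hkj⟩
  · simpa only [prefixVec_Cword_eq_iff hl A _ hj1, and_assoc] using hpos
end
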